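/- In the 3DSMI instance of dimension 4 on vertices {v_0,…,v_8, w_2, w_3, w_4} with edges v_i → v_{(i+1) mod 9} (i = 0,…,8) of rank 1, w_i → v_{i-2} (i = 2,3,4) of rank 1, v_i → w_{i+1} (i = 1,2,3) of rank 2, and v_i → v_{(i+4) mod 9} (i = 0,…,8) of rank 2 for i ∈ {0,4,5,6,7,8} and rank 3 for i ∈ {1,2,3}: with indices mod 9, define 𝓜₁(i) = {(v_i,v_{i+1},v_{i+5}), (v_{i+2},v_{i+6},v_{i+7}), (v_{i+3},v_{i+4},v_{i+8})} and 𝓜₂(i) = {(v_i,v_{i+1},w_{i+2}), (v_{i+2},v_{i+6},v_{i+7}), (v_{i+3},v_{i+4},v_{i+8})}. Then 𝓜₁(0) and 𝓜₂(0) are blocked by (v_1,v_2,w_3), 𝓜₁(1) and 𝓜₂(1) are blocked by (v_2,v_3,w_4), and 𝓜₁(2) and 𝓜₂(2) are blocked by (v_0,v_1,w_2). -/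

import Mathlib

/-- A 3DSMI instance of dimension `n`: a directed graph on a vertex set `V`
partitioned into three genders (men, women, dogs), each of size `n`, where every
edge goes from gender `g` to gender `g+1`, together with a rank function such that
for every vertex of out-degree `k` the ranks of its outgoing edges are exactly
`1, …, k`. -/
structure TDSMI (V : Type) [Fintype V] [DecidableEq V] (n : ℕ) where
  E : V → V → Bool
  r : V → V → ℕ
  gender : V → Fin 3
  gender_card : ∀ g : Fin 3, (Finset.univ.filter fun v => gender v = g).card = n
  edge_gender : ∀ v w : V, E v w → gender w = gender v + 1
  rank_bij : ∀ v : V,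
    (Finset.univ.filter fun w => E v w).image (r v)
      = Finset.Icc 1 (Finset.univ.filter fun w => E v w).card

namespace TDSMI

variable {V : Type} [Fintype V] [DecidableEq V] {n : ℕ}

/-- A family: a directed 3-cycle `a → b → c → a`. -/
def IsFamily (G : TDSMI V n) (a b c : V) : Prop :=
  G.E a b ∧ G.E b c ∧ G.E c a

/-- `v` is one of the vertices of the triple `t`. -/
def MemTriple (v : V) (t : V × V × V) : Prop :=
  v = t.1 ∨ v = t.2.1 ∨ v = t.2.2

/-- A matching: a set of pairwise vertex-disjoint families. -/
def IsMatching (G : TDSMI V n) (F : Finset (V × V × V)) : Prop :=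
  (∀ t ∈ F, G.IsFamily t.1 t.2.1 t.2.2) ∧
  ∀ t ∈ F, ∀ t' ∈ F, t ≠ t' → ∀ v : V, ¬ (MemTriple v t ∧ MemTriple v t')

/-- `w` is the vertex that the edge leaving `v` inside its family of `F` points to. -/
def MatchedTo (F : Finset (V × V × V)) (v w : V) : Prop :=
  ∃ t ∈ F, (t.1 = v ∧ t.2.1 = w) ∨ (t.2.1 = v ∧ t.2.2 = w) ∨ (t.2.2 = v ∧ t.1 = w)

/-- `r(v,w) < R_F(v)`: the rank of the edge `v → w` is smaller than the rank of `v` in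
the matching `F` (if `v` is in no family of `F`, its rank is `+∞` and this holds
vacuously). -/
def Prefers (G : TDSMI V n) (F : Finset (V × V × V)) (v w : V) : Prop :=
  ∀ u : V, MatchedTo F v u → G.r v w < G.r v u

/-- The directed 3-cycle `(a, b, c)` blocks the matching `F`. -/
def Blocks (G : TDSMI V n) (F : Finset (V × V × V)) (a b c : V) : Prop :=
  G.IsFamily a b c ∧ G.Prefers F a b ∧ G.Prefers F b c ∧ G.Prefers F c a

/-- A matching is weakly stable if no directed 3-cycle blocks it. -/
def WeaklyStable (G : TDSMI V n) (F : Finset (V × V × V)) : Prop :=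
  ∀ a b c : V, ¬ G.Blocks F a b c

end TDSMI

/- Vertices `0,…,8` are `v_0,…,v_8`; vertices `9, 10, 11` are `w_2, w_3, w_4`. -/

def rank1Edges : List (ℕ × ℕ) :=
  [(0,1),(1,2),(2,3),(3,4),(4,5),(5,6),(6,7),(7,8),(8,0),(9,0),(10,1),(11,2)]
def rank2Edges : List (ℕ × ℕ) :=
  [(1,9),(2,10),(3,11),(0,4),(4,8),(5,0),(6,1),(7,2),(8,3)]
def rank3Edges : List (ℕ × ℕ) := [(1,5),(2,6),(3,7)]

/-- The 3DSMI instance of dimension 4 from the Appendix of the paper. -/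
def G4 : TDSMI (Fin 12) 4 where
  E v w := decide ((v.val, w.val) ∈ rank1Edges ++ rank2Edges ++ rank3Edges)
  r v w :=
    if (v.val, w.val) ∈ rank1Edges then 1
    else if (v.val, w.val) ∈ rank2Edges then 2
    else if (v.val, w.val) ∈ rank3Edges then 3
    else 0
  gender v := ⟨(if v.val < 9 then v.val else v.val - 7) % 3, Nat.mod_lt _ (by norm_num)⟩
  gender_card := by decide
  edge_gender := by decide
  rank_bij := by decide

abbrev T12 := Fin 12 × Fin 12 × Fin 12

/-- `𝓜₁(i)`, written out with indices mod 9. -/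
def M1 (i : ℕ) : Finset T12 :=
  {(⟨i % 9, by omega⟩, ⟨(i+1) % 9, by omega⟩, ⟨(i+5) % 9, by omega⟩),
   (⟨(i+2) % 9, by omega⟩, ⟨(i+6) % 9, by omega⟩, ⟨(i+7) % 9, by omega⟩),
   (⟨(i+3) % 9, by omega⟩, ⟨(i+4) % 9, by omega⟩, ⟨(i+8) % 9, by omega⟩)}

/-- `𝓜₂(i)` for `i = 0, 1, 2`: as `𝓜₁(i)` but with first family `(v_i, v_{i+1}, w_{i+2})`,
where `w_{i+2}` is the vertex `i + 9`. -/
def M2 (i : ℕ) : Finset T12 :=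
  {(⟨i % 9, by omega⟩, ⟨(i+1) % 9, by omega⟩, ⟨(i+9) % 12, by omega⟩),
   (⟨(i+2) % 9, by omega⟩, ⟨(i+6) % 9, by omega⟩, ⟨(i+7) % 9, by omega⟩),
   (⟨(i+3) % 9, by omega⟩, ⟨(i+4) % 9, by omega⟩, ⟨(i+8) % 9, by omega⟩)}

/-! In each of the six matchings, the first two vertices of the blocking cycle are matched
along edges of worse rank than the cycle's edges, and its last vertex, a `w`-vertex, is
unmatched and so prefers any edge. -/

namespace TDSMI

instance {V : Type} [DecidableEq V] (v : V) (t : V × V × V) : Decidable (MemTriple v t) := by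
  unfold MemTriple; infer_instance

instance {V : Type} [DecidableEq V] (F : Finset (V × V × V)) (v w : V) :
    Decidable (MatchedTo F v w) := by
  unfold MatchedTo; infer_instance

theorem memTriple_of_edge_mem {V : Type} {t : V × V × V} {v w : V}
    (h : (t.1 = v ∧ t.2.1 = w) ∨ (t.2.1 = v ∧ t.2.2 = w) ∨ (t.2.2 = v ∧ t.1 = w)) :
    MemTriple v t := by
  rcases h with ⟨rfl, -⟩ | ⟨rfl, -⟩ | ⟨rfl, -⟩ <;> simp [MemTriple]

variable {V : Type} [Fintype V] [DecidableEq V] {n : ℕ} {G : TDSMI V n}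
  {F : Finset (V × V × V)}

instance (G : TDSMI V n) (a b c : V) : Decidable (G.IsFamily a b c) := by
  unfold IsFamily; infer_instance

instance (G : TDSMI V n) (F : Finset (V × V × V)) : Decidable (G.IsMatching F) := by
  unfold IsMatching
  -- instance search alone would try quantifying over all of `V × V × V` and give up
  exact @instDecidableAnd _ _ Finset.decidableDforallFinset Finset.decidableDforallFinset

theorem ne_of_E {v w : V} (h : G.E v w) : v ≠ w := by
  rintro rfl
  have hg := G.edge_gender v v h
  generalize G.gender v = g at hg
  revert g; decide

theorem IsMatching.matchedTo_unique (hF : G.IsMatching F) {v w u : V}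
    (hw : MatchedTo F v w) (hu : MatchedTo F v u) : w = u := by
  obtain ⟨t, ht, htw⟩ := hw
  obtain ⟨t', ht', htu⟩ := hu
  obtain rfl : t = t' := by
    by_contra hne
    exact hF.2 t ht t' ht' hne v
      ⟨memTriple_of_edge_mem htw, memTriple_of_edge_mem htu⟩
  -- every edge changes the gender, so the three vertices of a family are distinct
  obtain ⟨h12, h23, h31⟩ := hF.1 t ht
  have := ne_of_E h12
  have := ne_of_E h23
  have := ne_of_E h31
  grind

theorem IsMatching.prefers_iff (hF : G.IsMatching F) {v w x : V} (hvw : MatchedTo F v w) :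
    G.Prefers F v x ↔ G.r v x < G.r v w :=
  ⟨fun h => h w hvw, fun h _ hu => hF.matchedTo_unique hvw hu ▸ h⟩

theorem Blocks.of_isMatching {a b c a' b' : V} (hF : G.IsMatching F) (habc : G.IsFamily a b c)
    (ha : MatchedTo F a a') (hb : MatchedTo F b b') (hc : ∀ u, ¬ MatchedTo F c u)
    (hab : G.r a b < G.r a a') (hbc : G.r b c < G.r b b') : G.Blocks F a b c :=
  ⟨habc, (hF.prefers_iff ha).2 hab, (hF.prefers_iff hb).2 hbc,
    fun u hu => absurd hu (hc u)⟩

end TDSMI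

/-- `𝓜₁(0)` and `𝓜₂(0)` are blocked by `(v_1, v_2, w_3)`, `𝓜₁(1)` and `𝓜₂(1)` by
`(v_2, v_3, w_4)`, and `𝓜₁(2)` and `𝓜₂(2)` by `(v_0, v_1, w_2)`. -/
theorem stmt_17 :
    G4.Blocks (M1 0) 1 2 10 ∧ G4.Blocks (M2 0) 1 2 10 ∧
    G4.Blocks (M1 1) 2 3 11 ∧ G4.Blocks (M2 1) 2 3 11 ∧
    G4.Blocks (M1 2) 0 1 9 ∧ G4.Blocks (M2 2) 0 1 9 := by
  refine ⟨.of_isMatching (a' := 5) (b' := 6) ?_ ?_ ?_ ?_ ?_ ?_ ?_,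
    .of_isMatching (a' := 9) (b' := 6) ?_ ?_ ?_ ?_ ?_ ?_ ?_,
    .of_isMatching (a' := 6) (b' := 7) ?_ ?_ ?_ ?_ ?_ ?_ ?_,
    .of_isMatching (a' := 10) (b' := 7) ?_ ?_ ?_ ?_ ?_ ?_ ?_,
    .of_isMatching (a' := 4) (b' := 5) ?_ ?_ ?_ ?_ ?_ ?_ ?_,
    .of_isMatching (a' := 4) (b' := 5) ?_ ?_ ?_ ?_ ?_ ?_ ?_⟩ <;> decide
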